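/- (Lemma 7.1) Fix N ≥ 1 and let λ ∈ SGN(N) be a signature. Let L(λ) ⊂ 𝔛^{(N)} be the associated N-point configuration, and let X(λ) = (L(λ) ∖ 𝔛^{(N)}_in) ∪ (𝔛^{(N)}_in ∖ L(λ)) be the associated configuration of particles and holes. Let a±_i = a_i(λ±) and b±_i = b_i(λ±) denote the modified Frobenius coordinates of the Young diagrams λ⁺ and λ⁻. Then X(λ) ∩ 𝔛^{(N)}_out = {a⁺_i + N/2 : 1 ≤ i ≤ d(λ⁺)} ∪ {−a⁻_j − N/2 : 1 ≤ j ≤ d(λ⁻)} and X(λ) ∩ 𝔛^{(N)}_in = {N/2 − b⁺_i : 1 ≤ i ≤ d(λ⁺)} ∪ {−N/2 + b⁻_j : 1 ≤ j ≤ d(λ⁻)}. -/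

import Mathlib

/-- A signature of length `N`: a nonincreasing `N`-tuple of integers. -/
def Signature (N : ℕ) : Type := {l : Fin N → ℤ // Antitone l}

/-- The number of diagonal boxes `d(μ)` of a Young diagram `μ`. -/
def diagLen (μ : YoungDiagram) : ℕ := (μ.cells.filter fun c => c.1 = c.2).card

/-- Modified Frobenius coordinate `a_i(μ) = μ_i - i + 1/2` (0-indexed: `k = i - 1`). -/
def aFrob (μ : YoungDiagram) (k : ℕ) : ℚ := (μ.rowLen k : ℚ) - k - 1/2

/-- Modified Frobenius coordinate `b_i(μ) = μ'_i - i + 1/2` (0-indexed: `k = i - 1`). -/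
def bFrob (μ : YoungDiagram) (k : ℕ) : ℚ := (μ.colLen k : ℚ) - k - 1/2

/-- The Young diagram `λ⁺` whose `i`-th row is `max(λ_i, 0)`. -/
def sigPosYD {N : ℕ} (l : Signature N) : YoungDiagram :=
  YoungDiagram.ofRowLens (List.ofFn fun i => (l.1 i).toNat)
    (List.sortedGE_ofFn_iff.mpr fun _ _ h => Int.toNat_le_toNat (l.2 h))

/-- The Young diagram `λ⁻` whose `j`-th row is `max(-λ_{N+1-j}, 0)`. -/
def sigNegYD {N : ℕ} (l : Signature N) : YoungDiagram :=
  YoungDiagram.ofRowLens (List.ofFn fun i => (-(l.1 i.rev)).toNat)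
    (List.sortedGE_ofFn_iff.mpr fun _ _ h =>
      Int.toNat_le_toNat (neg_le_neg (l.2 (Fin.rev_le_rev.mpr h))))

/-- The lattice `𝔛^{(N)} = ℤ + (N+1)/2 ⊂ ℚ`. -/
def latticeSet (N : ℕ) : Set ℚ := {x | ∃ m : ℤ, x = (m : ℚ) + (N + 1) / 2}

/-- The inner part `𝔛^{(N)}_in = 𝔛^{(N)} ∩ (-N/2, N/2) = {-(N-1)/2, …, (N-1)/2}`
(exactly `N` points). -/
def innerFin (N : ℕ) : Finset ℚ :=
  Finset.univ.image fun k : Fin N => (k : ℚ) - (N - 1) / 2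

/-- The outer part `𝔛^{(N)}_out = 𝔛^{(N)} ∖ 𝔛^{(N)}_in`. -/
def outerSet (N : ℕ) : Set ℚ := latticeSet N \ ↑(innerFin N)

/-- The `N`-point configuration `L(λ) = {λ_i - i + (N+1)/2 : 1 ≤ i ≤ N} ⊂ 𝔛^{(N)}`. -/
def config (N : ℕ) (l : Signature N) : Finset ℚ :=
  Finset.univ.image fun i : Fin N => (l.1 i : ℚ) - ((i : ℕ) + 1) + (N + 1) / 2

/-- The particles/holes configuration
`X(λ) = (L(λ) ∖ 𝔛^{(N)}_in) ∪ (𝔛^{(N)}_in ∖ L(λ))`. -/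
def Xconf (N : ℕ) (l : Signature N) : Finset ℚ :=
  (config N l \ innerFin N) ∪ (innerFin N \ config N l)

/-!
In the integer coordinate `t = x - (N + 1)/2` the inner part `𝔛_in` is `[-N, -1]` and `L(λ)` is
`{λ_i - i - 1}`. For a Young diagram `μ` the row positions `μ_i - i - 1` and the column positions
`j - μ'_j` partition `ℤ` (its Maya diagram); the nonnegative row positions are `a_k - 1/2` and the
negative column positions are `-b_k - 1/2`, for `k < d(μ)`. Particles with `λ_i ≥ 0` are row
positions of `λ⁺`, which gives the `λ⁺` halves of both identities. The involution
`λ ↦ (-λ_N, …, -λ_1)` swaps `λ⁺` and `λ⁻` and acts on `𝔛` by `x ↦ -x`, which gives the `λ⁻` halves.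
Finally, an inner hole seen by neither diagram would be the position `-i - 1` of an empty row of
`λ⁺` and, at the same time, of an empty row of `λ⁻`, forcing both `λ_i < 0` and `λ_i > 0`.
-/

namespace YoungDiagram

variable (μ : YoungDiagram)

theorem lt_diagLen_iff (k : ℕ) : k < diagLen μ ↔ (k, k) ∈ μ := by
  obtain ⟨d, hd⟩ : ∃ d, {k | (k, k) ∈ μ} = Set.Iio d := by
    have hlower : IsLowerSet {k | (k, k) ∈ μ} := fun _ _ hji hi =>
      μ.isLowerSet (Prod.mk_le_mk.2 ⟨hji, hji⟩) hi
    refine hlower.eq_univ_or_Iio.resolve_left fun huniv => ?_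
    have hdiag : (μ.colLen 0, μ.colLen 0) ∈ μ := Set.eq_univ_iff_forall.1 huniv _
    exact (lt_irrefl _) (mem_iff_lt_colLen.1
      (μ.isLowerSet (Prod.mk_le_mk.2 ⟨le_rfl, Nat.zero_le _⟩) hdiag))
  have hcells : μ.cells.filter (fun c => c.1 = c.2) =
      (Finset.range d).map ⟨fun k => (k, k), fun _ _ h => (Prod.mk.inj h).1⟩ := by
    ext ⟨i, j⟩
    have hmem : ∀ k, (k, k) ∈ μ ↔ k < d := fun k => Set.ext_iff.1 hd k
    simp only [Finset.mem_filter, mem_cells, Finset.mem_map, Finset.mem_range]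
    constructor
    · rintro ⟨hc, rfl⟩
      exact ⟨i, (hmem i).1 hc, rfl⟩
    · rintro ⟨k, hk, ⟨⟩⟩
      exact ⟨(hmem _).2 hk, rfl⟩
  rw [diagLen, hcells, Finset.card_map, Finset.card_range, ← Set.mem_Iio, ← hd]
  rfl

theorem rowLen_sub_ne_sub_colLen (i j : ℕ) :
    (μ.rowLen i : ℤ) - i - 1 ≠ j - μ.colLen j := by
  by_cases h : (i, j) ∈ μ
  · have := mem_iff_lt_rowLen.1 h
    have := mem_iff_lt_colLen.1 h
    omega
  · have := mem_iff_lt_rowLen.not.1 h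
    have := mem_iff_lt_colLen.not.1 h
    omega

theorem exists_rowLen_sub_or_sub_colLen (t : ℤ) :
    (∃ i : ℕ, t = μ.rowLen i - i - 1) ∨ ∃ j : ℕ, t = j - μ.colLen j := by
  have hex : ∃ i : ℕ, (μ.rowLen i : ℤ) - i - 1 ≤ t :=
    ⟨μ.rowLen 0 + t.natAbs, by have := μ.rowLen_anti 0 (μ.rowLen 0 + t.natAbs) (by omega); omega⟩
  -- `i` is the first row ending weakly left of the diagonal `t`; if it does not end on it,
  -- the column `t + i` has length exactly `i`.
  set i := Nat.find hex
  have hi : (μ.rowLen i : ℤ) - i - 1 ≤ t := Nat.find_spec hex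
  rcases hi.eq_or_lt with heq | hlt
  · exact .inl ⟨i, heq.symm⟩
  obtain ⟨j, hj⟩ : ∃ j : ℕ, (j : ℤ) = t + i := ⟨(t + i).toNat, by omega⟩
  have hcol_le : μ.colLen j ≤ i := by
    by_contra! h
    have := mem_iff_lt_rowLen.1 (mem_iff_lt_colLen.2 h)
    omega
  have hcol_ge : i ≤ μ.colLen j := by
    rcases Nat.eq_zero_or_pos i with h0 | hpos
    · omega
    have hprev := Nat.find_min hex (m := i - 1) (by omega)
    have : (i - 1, j) ∈ μ := mem_iff_lt_rowLen.2 (by push_cast [Nat.cast_sub hpos] at hprev; omega)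
    have := mem_iff_lt_colLen.1 this
    omega
  exact .inr ⟨j, by omega⟩

theorem exists_lt_diagLen_rowLen_iff (t : ℤ) :
    (∃ k < diagLen μ, t = μ.rowLen k - k - 1) ↔ 0 ≤ t ∧ ∃ i : ℕ, t = μ.rowLen i - i - 1 := by
  simp only [lt_diagLen_iff, mem_iff_lt_rowLen]
  constructor
  · rintro ⟨k, hk, rfl⟩
    exact ⟨by omega, k, rfl⟩
  · rintro ⟨ht, i, rfl⟩
    exact ⟨i, by omega, rfl⟩

theorem exists_lt_diagLen_colLen_iff {t : ℤ} (ht : t < 0) :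
    (∃ k < diagLen μ, t = k - μ.colLen k) ↔ ∀ i : ℕ, t ≠ μ.rowLen i - i - 1 := by
  constructor
  · rintro ⟨k, -, rfl⟩ i
    exact (μ.rowLen_sub_ne_sub_colLen i k).symm
  · intro h
    obtain ⟨j, rfl⟩ := (μ.exists_rowLen_sub_or_sub_colLen t).resolve_left (by simpa using h)
    refine ⟨j, ?_, rfl⟩
    rw [lt_diagLen_iff, mem_iff_lt_colLen]
    omega

end YoungDiagram

namespace Signature

variable {N : ℕ} (l : Signature N)

def dual : Signature N :=
  ⟨fun i => -l.1 i.rev, fun _ _ h => neg_le_neg (l.2 (Fin.rev_le_rev.2 h))⟩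

theorem sigNegYD_eq_sigPosYD_dual : sigNegYD l = sigPosYD l.dual := rfl

/-- `L(λ)` in the integer coordinate `t = x - (N + 1)/2`. -/
def particles : Set ℤ := {t | ∃ i : Fin N, t = l.1 i - i - 1}

theorem mem_particles_dual {t : ℤ} : t ∈ l.dual.particles ↔ -N - 1 - t ∈ l.particles := by
  constructor
  · rintro ⟨i, rfl⟩
    refine ⟨i.rev, ?_⟩
    simp only [dual, Fin.val_rev]
    omega
  · rintro ⟨i, hi⟩
    refine ⟨i.rev, ?_⟩
    simp only [dual, Fin.rev_rev, Fin.val_rev]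
    omega

theorem mem_sigPosYD {i j : ℕ} : (i, j) ∈ sigPosYD l ↔ ∃ h : i < N, (j : ℤ) < l.1 ⟨i, h⟩ := by
  simp [sigPosYD, YoungDiagram.mem_ofRowLens, Int.lt_toNat]

theorem rowLen_sigPosYD (i : Fin N) : (sigPosYD l).rowLen i = (l.1 i).toNat :=
  eq_of_forall_lt_iff fun j => by
    simp [← YoungDiagram.mem_iff_lt_rowLen, mem_sigPosYD, Int.lt_toNat]

theorem rowLen_sigPosYD_of_le {i : ℕ} (h : N ≤ i) : (sigPosYD l).rowLen i = 0 := by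
  by_contra h0
  obtain ⟨hi, -⟩ := (mem_sigPosYD l).1 (YoungDiagram.mem_iff_lt_rowLen.2 (Nat.pos_of_ne_zero h0))
  omega

theorem colLen_sigPosYD_le (j : ℕ) : (sigPosYD l).colLen j ≤ N := by
  by_contra! h
  obtain ⟨hN, -⟩ := (mem_sigPosYD l).1 (YoungDiagram.mem_iff_lt_colLen.2 h)
  omega

theorem mem_particles_and_nonneg_iff (t : ℤ) :
    t ∈ l.particles ∧ 0 ≤ t ↔ ∃ k < diagLen (sigPosYD l), t = (sigPosYD l).rowLen k - k - 1 := by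
  rw [YoungDiagram.exists_lt_diagLen_rowLen_iff, and_comm]
  refine and_congr_right fun ht => ⟨?_, ?_⟩
  · rintro ⟨i, rfl⟩
    exact ⟨i, by rw [rowLen_sigPosYD]; omega⟩
  · rintro ⟨i, rfl⟩
    have hN : i < N := by
      by_contra! h
      rw [rowLen_sigPosYD_of_le l h] at ht
      omega
    lift i to Fin N using hN
    have := rowLen_sigPosYD l i
    exact ⟨i, by omega⟩

theorem exists_neg_eq_of_notMem_particles {t : ℤ} (ht : -N ≤ t) (hp : t ∉ l.particles)
    (hrow : ∃ i : ℕ, t = (sigPosYD l).rowLen i - i - 1) :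
    ∃ i : Fin N, l.1 i < 0 ∧ t = -i - 1 := by
  obtain ⟨i, rfl⟩ := hrow
  have hN : i < N := by
    by_contra! h
    rw [rowLen_sigPosYD_of_le l h] at ht
    omega
  lift i to Fin N using hN
  have hrow := rowLen_sigPosYD l i
  have hneg : l.1 i < 0 := by
    by_contra! hnonneg
    exact hp ⟨i, by omega⟩
  exact ⟨i, hneg, by omega⟩

theorem sub_colLen_notMem_particles (k : ℕ) :
    (k : ℤ) - (sigPosYD l).colLen k ∉ l.particles := by
  rintro ⟨i, hi⟩
  have hrow := rowLen_sigPosYD l i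
  rcases le_or_gt 0 (l.1 i) with hnonneg | hneg
  · exact (sigPosYD l).rowLen_sub_ne_sub_colLen i k (by omega)
  · have hcol : (sigPosYD l).colLen 0 ≤ i := by
      by_contra! h
      have := YoungDiagram.mem_iff_lt_rowLen.1 (YoungDiagram.mem_iff_lt_colLen.2 h)
      omega
    have := (sigPosYD l).colLen_anti 0 k (Nat.zero_le k)
    omega

theorem sub_colLen_mem_Icc_of_lt_diagLen {k : ℕ} (hk : k < diagLen (sigPosYD l)) :
    (k : ℤ) - (sigPosYD l).colLen k ∈ Set.Icc (-N : ℤ) (-1) := by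
  have := colLen_sigPosYD_le l k
  have := YoungDiagram.mem_iff_lt_colLen.1 (((sigPosYD l).lt_diagLen_iff k).1 hk)
  constructor <;> omega

theorem mem_particles_diff_Icc_iff (t : ℤ) :
    t ∈ l.particles \ Set.Icc (-N : ℤ) (-1) ↔
      (∃ k < diagLen (sigPosYD l), t = (sigPosYD l).rowLen k - k - 1) ∨
      ∃ k < diagLen (sigNegYD l), t = k - N - (sigNegYD l).rowLen k := by
  rw [sigNegYD_eq_sigPosYD_dual]
  have hdual : (∃ k < diagLen (sigPosYD l.dual), t = k - N - (sigPosYD l.dual).rowLen k) ↔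
      ∃ k < diagLen (sigPosYD l.dual), -N - 1 - t = (sigPosYD l.dual).rowLen k - k - 1 :=
    exists_congr fun k => and_congr_right fun _ => by omega
  rw [hdual, ← mem_particles_and_nonneg_iff, ← mem_particles_and_nonneg_iff, mem_particles_dual,
    sub_sub_cancel, Set.mem_sdiff, Set.mem_Icc]
  by_cases hp : t ∈ l.particles
  · simp only [hp, true_and]
    omega
  · simp only [hp, false_and, or_self]

theorem mem_Icc_diff_particles_iff (t : ℤ) :
    t ∈ Set.Icc (-N : ℤ) (-1) \ l.particles ↔
      (∃ k < diagLen (sigPosYD l), t = k - (sigPosYD l).colLen k) ∨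
      ∃ k < diagLen (sigNegYD l), t = (sigNegYD l).colLen k - k - 1 - N := by
  rw [sigNegYD_eq_sigPosYD_dual]
  have hdual : (∃ k < diagLen (sigPosYD l.dual), t = (sigPosYD l.dual).colLen k - k - 1 - N) ↔
      ∃ k < diagLen (sigPosYD l.dual), -N - 1 - t = k - (sigPosYD l.dual).colLen k :=
    exists_congr fun k => and_congr_right fun _ => by omega
  rw [hdual]
  constructor
  · rintro ⟨⟨htN, ht1⟩, hp⟩
    by_contra hholes
    rw [not_or] at hholes
    have hp' : -N - 1 - t ∉ l.dual.particles := by rwa [mem_particles_dual, sub_sub_cancel]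
    obtain ⟨i, hi, hti⟩ := exists_neg_eq_of_notMem_particles l htN hp <| by
      simpa only [ne_eq, not_forall, not_not] using
        ((sigPosYD l).exists_lt_diagLen_colLen_iff (by omega)).not.1 hholes.1
    obtain ⟨j, hj, htj⟩ := exists_neg_eq_of_notMem_particles l.dual (by omega) hp' <| by
      simpa only [ne_eq, not_forall, not_not] using
        ((sigPosYD l.dual).exists_lt_diagLen_colLen_iff (by omega)).not.1 hholes.2
    have hrev : i = j.rev := Fin.ext (by simp only [Fin.val_rev]; omega)
    simp only [dual, hrev] at hi hj
    omega
  · rintro (⟨k, hk, rfl⟩ | ⟨k, hk, hkt⟩)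
    · exact ⟨sub_colLen_mem_Icc_of_lt_diagLen l hk, sub_colLen_notMem_particles l k⟩
    · have hIcc := sub_colLen_mem_Icc_of_lt_diagLen l.dual hk
      have hp := sub_colLen_notMem_particles l.dual k
      rw [← hkt, mem_particles_dual, sub_sub_cancel] at hp
      rw [← hkt, Set.mem_Icc] at hIcc
      exact ⟨⟨by omega, by omega⟩, hp⟩

end Signature

def latticePoint (N : ℕ) (t : ℤ) : ℚ := t + (N + 1) / 2

section LatticePoint

variable {N : ℕ}

theorem latticePoint_injective : Function.Injective (latticePoint N) := fun a b h => by
  simpa [latticePoint] using h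

theorem latticeSet_eq_range : latticeSet N = Set.range (latticePoint N) :=
  Set.ext fun _ => exists_congr fun _ => eq_comm

theorem coe_innerFin : (innerFin N : Set ℚ) = latticePoint N '' Set.Icc (-N) (-1) := by
  ext x
  simp only [innerFin, Finset.coe_image, Finset.coe_univ, Set.image_univ, Set.mem_range,
    Set.mem_image, Set.mem_Icc, latticePoint]
  constructor
  · rintro ⟨k, rfl⟩
    exact ⟨k - N, by omega, by push_cast; ring⟩
  · rintro ⟨t, ⟨htN, ht1⟩, rfl⟩
    refine ⟨⟨(t + N).toNat, by omega⟩, ?_⟩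
    have : (((t + N).toNat : ℕ) : ℚ) = t + N := by exact_mod_cast Int.toNat_of_nonneg (by omega)
    simp only [this]
    ring

theorem coe_config (l : Signature N) : (config N l : Set ℚ) = latticePoint N '' l.particles := by
  ext x
  simp only [config, Finset.coe_image, Finset.coe_univ, Set.image_univ, Set.mem_range,
    Set.mem_image, Signature.particles, Set.mem_ofPred_eq, latticePoint]
  constructor
  · rintro ⟨i, rfl⟩
    exact ⟨_, ⟨i, rfl⟩, by push_cast; ring⟩
  · rintro ⟨_, ⟨i, rfl⟩, rfl⟩
    exact ⟨i, by push_cast; ring⟩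

theorem Xconf_inter_outerSet (l : Signature N) :
    ↑(Xconf N l) ∩ outerSet N = latticePoint N '' (l.particles \ Set.Icc (-N : ℤ) (-1)) := by
  rw [Xconf, outerSet, latticeSet_eq_range, ← Set.image_univ]
  simp only [Finset.coe_union, Finset.coe_sdiff, coe_config, coe_innerFin,
    ← Set.image_sdiff latticePoint_injective, ← Set.image_union,
    ← Set.image_inter latticePoint_injective]
  congr 1
  ext t
  simp only [Set.mem_inter_iff, Set.mem_union, Set.mem_sdiff, Set.mem_univ, true_and]
  tauto

theorem Xconf_inter_innerFin (l : Signature N) :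
    ↑(Xconf N l) ∩ ↑(innerFin N) = latticePoint N '' (Set.Icc (-N : ℤ) (-1) \ l.particles) := by
  simp only [Xconf, Finset.coe_union, Finset.coe_sdiff, coe_config, coe_innerFin,
    ← Set.image_sdiff latticePoint_injective, ← Set.image_union,
    ← Set.image_inter latticePoint_injective]
  congr 1
  ext t
  simp only [Set.mem_inter_iff, Set.mem_union, Set.mem_sdiff]
  tauto

theorem setOf_exists_lt_eq_image {d : ℕ} {f : ℕ → ℚ} {g : ℕ → ℤ}
    (h : ∀ k, f k = latticePoint N (g k)) :
    {x | ∃ k < d, x = f k} = latticePoint N '' {t | ∃ k < d, t = g k} := by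
  ext x
  constructor
  · rintro ⟨k, hk, rfl⟩
    exact ⟨g k, ⟨k, hk, rfl⟩, (h k).symm⟩
  · rintro ⟨_, ⟨k, hk, rfl⟩, rfl⟩
    exact ⟨k, hk, (h k).symm⟩

end LatticePoint

theorem particles_holes_frobenius_general (N : ℕ) (l : Signature N) :
    (↑(Xconf N l) ∩ outerSet N =
      ({x : ℚ | ∃ k < diagLen (sigPosYD l), x = aFrob (sigPosYD l) k + N / 2} ∪
       {x : ℚ | ∃ k < diagLen (sigNegYD l), x = -(aFrob (sigNegYD l) k) - N / 2})) ∧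
    (↑(Xconf N l) ∩ ↑(innerFin N) =
      ({x : ℚ | ∃ k < diagLen (sigPosYD l), x = N / 2 - bFrob (sigPosYD l) k} ∪
       {x : ℚ | ∃ k < diagLen (sigNegYD l), x = -(N / 2) + bFrob (sigNegYD l) k})) := by
  constructor
  · rw [Xconf_inter_outerSet,
      setOf_exists_lt_eq_image (g := fun k => (sigPosYD l).rowLen k - k - 1)
        fun k => by simp only [aFrob, latticePoint]; push_cast; ring,
      setOf_exists_lt_eq_image (g := fun k => k - N - (sigNegYD l).rowLen k)
        fun k => by simp only [aFrob, latticePoint]; push_cast; ring,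
      ← Set.image_union]
    exact congrArg _ (Set.ext l.mem_particles_diff_Icc_iff)
  · rw [Xconf_inter_innerFin,
      setOf_exists_lt_eq_image (g := fun k => k - (sigPosYD l).colLen k)
        fun k => by simp only [bFrob, latticePoint]; push_cast; ring,
      setOf_exists_lt_eq_image (g := fun k => (sigNegYD l).colLen k - k - 1 - N)
        fun k => by simp only [bFrob, latticePoint]; push_cast; ring,
      ← Set.image_union]
    exact congrArg _ (Set.ext l.mem_Icc_diff_particles_iff)

/-- Lemma 7.1: for a signature `λ ∈ SGN(N)` with particles/holes configuration `X(λ)`,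
`X(λ) ∩ 𝔛^{(N)}_out = {a⁺_i + N/2} ∪ {-a⁻_j - N/2}` and
`X(λ) ∩ 𝔛^{(N)}_in = {N/2 - b⁺_i} ∪ {-N/2 + b⁻_j}`, where `a±_i, b±_i` are the modified
Frobenius coordinates of `λ±` (with `1 ≤ i ≤ d(λ±)`). -/
theorem particles_holes_frobenius (N : ℕ) (hN : 1 ≤ N) (l : Signature N) :
    (↑(Xconf N l) ∩ outerSet N =
      ({x : ℚ | ∃ k < diagLen (sigPosYD l), x = aFrob (sigPosYD l) k + N / 2} ∪
       {x : ℚ | ∃ k < diagLen (sigNegYD l), x = -(aFrob (sigNegYD l) k) - N / 2})) ∧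
    (↑(Xconf N l) ∩ ↑(innerFin N) =
      ({x : ℚ | ∃ k < diagLen (sigPosYD l), x = N / 2 - bFrob (sigPosYD l) k} ∪
       {x : ℚ | ∃ k < diagLen (sigNegYD l), x = -(N / 2) + bFrob (sigNegYD l) k})) :=
  particles_holes_frobenius_general N l
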